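/- Two partitions λ and μ have the same p-core if and only if, when represented on p-abacuses with the same total number of beads, their configurations have equal numbers of beads on each runner. -/
import Mathlib


/-- The beta-numbers (0-indexed abacus positions) of a partition `f` with `b`
beads: `f i + (b - 1 - i)` for `i < b`. -/
def betaSet (b : ℕ) (f : ℕ → ℕ) : Finset ℕ :=
  (Finset.range b).image (fun i => f i + (b - 1 - i))

/-- Pushing every bead of the configuration `S` as far up its runner as possible
(position `m` lies on runner `m % p` at level `m / p`); the resulting
configuration is the abacus of the `p`-core. -/
def pushUp (p : ℕ) (S : Finset ℕ) : Set ℕ :=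
  {m | m / p < (S.filter (fun x => x % p = m % p)).card}

lemma pushUp_mem_iff (p : ℕ) (hp : 0 < p) (S : Finset ℕ) (r k : ℕ) (hr : r < p) :
    (r + p * k) ∈ pushUp p S ↔ k < (S.filter (fun x => x % p = r)).card := by
  have hmod : (r + p * k) % p = r := by
    rw [Nat.add_mul_mod_self_left, Nat.mod_eq_of_lt hr]
  have hdiv : (r + p * k) / p = k := by
    rw [Nat.add_mul_div_left _ _ hp, Nat.div_eq_of_lt hr, Nat.zero_add]
  simp only [pushUp, Set.mem_setOf_eq, hmod, hdiv]

/-- Two partitions have the same `p`-core (i.e. the pushed-up versions of their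
abacus configurations coincide) if and only if, when represented on `p`-abacuses
with the same number `b` of beads, their configurations have equal numbers of
beads on each runner. -/
theorem same_core_iff_same_runner_counts (p b : ℕ) (hp : 0 < p) (f g : ℕ → ℕ)
    (hf : Antitone f) (hg : Antitone g)
    (hfb : ∀ i, b ≤ i → f i = 0) (hgb : ∀ i, b ≤ i → g i = 0) :
    pushUp p (betaSet b f) = pushUp p (betaSet b g) ↔
      ∀ r < p, ((betaSet b f).filter (fun m => m % p = r)).card =
        ((betaSet b g).filter (fun m => m % p = r)).card := by
  constructor
  · intro h r hr
    set a := ((betaSet b f).filter (fun m => m % p = r)).card with ha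
    set c := ((betaSet b g).filter (fun m => m % p = r)).card with hc
    have key : ∀ k, k < a ↔ k < c := by
      intro k
      rw [← pushUp_mem_iff p hp _ r k hr, ← pushUp_mem_iff p hp _ r k hr, h]
    have h1 := key a
    have h2 := key c
    omega
  · intro h
    ext m
    have hr : m % p < p := Nat.mod_lt _ hp
    simp only [pushUp, Set.mem_setOf_eq]
    rw [h (m % p) hr]
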